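/- Let $R$ be a Noetherian ring and $M$ a finitely generated torsion-free $R$-module. The following are equivalent: (1) $\widetilde{M}$ is a finitely generated $R$-module; (2) $\mathrm{U}(aM)=a\widetilde{M}$ for some non-zerodivisor $a$ of $R$; (3) $(M:_R\widetilde{M})$ contains a non-zerodivisor of $R$. When this holds, $\widetilde{M}=\frac{\mathrm{U}(aM)}{a}$ for some non-zerodivisor $a$. -/

import Mathlib

open Pointwise

/-- The height of an ideal. -/
noncomputable def idealHt {R : Type*} [CommRing R] (I : Ideal R) : ℕ∞ :=
  ⨅ p ∈ {p : PrimeSpectrum R | I ≤ p.asIdeal}, Order.height p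

/-- `Min¹_R(M/aM)`: the height-one minimal primes of the support of `M/aM`
(equivalently, of the annihilator of `M/aM`, as `M` is finitely generated). -/
noncomputable def minOne (R : Type*) [CommRing R] (M : Type*) [AddCommGroup M]
    [Module R M] (a : R) : Set (Ideal R) :=
  {p | p ∈ (Module.annihilator R (M ⧸ (a • (⊤ : Submodule R M)))).minimalPrimes ∧
    idealHt p = 1}

/-- `U(aM)`: the intersection of the primary components of `aM` in `M` at the
height-one minimal primes of `M/aM` (the primary component at a minimal prime
`p` being the saturation `{x ∈ M | sx ∈ aM for some s ∉ p}`); by convention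
`U(aM) = M` when there are no such primes. -/
noncomputable def Uset (R : Type*) [CommRing R] (M : Type*) [AddCommGroup M]
    [Module R M] (a : R) : Set M :=
  ⋂ p ∈ minOne R M a, {x : M | ∃ s, s ∉ p ∧ s • x ∈ (a • (⊤ : Submodule R M))}

/-! For a non-zero-divisor `a`, `U(aM) = aM̃ ∩ M` inside the localization. If `x ∈ U(aM)`, every
prime `q` containing `(aM :_R x)` contains a minimal prime `Q` of `M/aM`; `Q` contains `a`, so it
has height at least one, and `Q = q` of height one is ruled out by `x ∈ U(aM)`; hence
`x/a ∈ M̃`. Conversely, if `x/a ∈ M̃` is witnessed by an ideal `I` of height at least two, then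
`I` escapes every height-one prime `p`, and any `s ∈ I \ p` gives `s x ∈ aM`. Therefore
`U(aM) = aM̃` exactly when `aM̃ ⊆ M`. A finitely generated `M̃` has a common denominator, and
conversely `aM̃ = U(aM)` makes `M̃ ≅ U(aM)` a submodule of the Noetherian module `M`.
-/

/-- `M̃`, as a subset of `Q(R) ⊗_R M = (R⁰)⁻¹M`. -/
def tilde (R : Type*) [CommRing R] (M : Type*) [AddCommGroup M] [Module R M] :
    Set (LocalizedModule (nonZeroDivisors R) M) :=
  {f | ∃ I : Ideal R, 2 ≤ idealHt I ∧ ∀ i ∈ I,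
    i • f ∈ LinearMap.range (LocalizedModule.mkLinearMap (nonZeroDivisors R) M)}

section

variable {R : Type*} [CommRing R] {M : Type*} [AddCommGroup M] [Module R M]

local notation "mk" => LocalizedModule.mkLinearMap (nonZeroDivisors R) M

lemma LocalizedModule.exists_smul_mem_range_of_fg {S : Submonoid R}
    {N : Submodule R (LocalizedModule S M)} (hN : N.FG) :
    ∃ a ∈ S, ∀ f ∈ N, a • f ∈ Set.range (mkLinearMap S M) := by
  obtain ⟨s, rfl⟩ := hN
  obtain ⟨b, hb⟩ := IsLocalizedModule.exist_integer_multiples_of_finset S (mkLinearMap S M) s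
  have hspan : Submodule.span R s ≤
      (LinearMap.range (mkLinearMap S M)).comap ((b : R) • LinearMap.id) :=
    Submodule.span_le.mpr hb
  exact ⟨b, b.2, fun f hf => hspan hf⟩

lemma LocalizedModule.smul_bijective {S : Submonoid R} {a : R} (ha : a ∈ S) :
    Function.Bijective fun f : LocalizedModule S M => a • f :=
  (Module.End.isUnit_iff _).mp (IsLocalizedModule.map_units (mkLinearMap S M) ⟨a, ha⟩)

lemma LocalizedModule.mkLinearMap_injective {S : Submonoid R}
    (hM : ∀ r ∈ S, Function.Injective fun x : M => r • x) :
    Function.Injective (mkLinearMap S M) := by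
  intro x y h
  obtain ⟨u, hu⟩ := (mk_eq (s := 1) (s' := 1)).mp h
  simpa using hM u u.2 hu

-- The component of `aM` at `p` is the preimage of the `(R ∖ p)`-torsion of `M/aM`.
lemma exists_submodule_coe_eq_Uset (a : R) : ∃ N : Submodule R M, (N : Set M) = Uset R M a := by
  refine ⟨⨅ p : minOne R M a, have := p.2.1.1.1
    (Submodule.torsion' R (M ⧸ a • (⊤ : Submodule R M)) p.1.primeCompl).comap (Submodule.mkQ _), ?_⟩
  ext x
  simp [Uset, ← Submodule.Quotient.mk_smul, Submodule.Quotient.mk_eq_zero]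

lemma idealHt_eq_height (I : Ideal R) : idealHt I = I.height := by
  refine le_antisymm ?_ (le_iInf₂ fun p hp => ?_)
  · rw [Ideal.height_eq_inf_minimalPrimes]
    refine le_iInf₂ fun q hq => ?_
    exact (iInf₂_le (⟨q, hq.isPrime⟩ : PrimeSpectrum R) hq.1.2).trans
      (PrimeSpectrum.height_eq_orderHeight ⟨q, hq.isPrime⟩).ge
  · exact (Ideal.height_mono hp).trans (PrimeSpectrum.height_eq_orderHeight p).le

lemma two_le_height_of_mem_Uset_of_colon_le {a : R} (ha : a ∈ nonZeroDivisors R) {x : M}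
    (hx : x ∈ Uset R M a) {q : Ideal R} [q.IsPrime]
    (hq : (a • (⊤ : Submodule R M)).colon (Submodule.span R {x}) ≤ q) : 2 ≤ q.height := by
  set N := a • (⊤ : Submodule R M)
  have hann : Module.annihilator R (M ⧸ N) ≤ N.colon (Submodule.span R {x}) := by
    rw [Submodule.annihilator_quotient]
    exact Submodule.colon_mono le_rfl (Set.subset_univ _)
  have haN : a ∈ Module.annihilator R (M ⧸ N) := by
    rw [Submodule.annihilator_quotient, Submodule.mem_colon]
    exact fun m _ => Submodule.smul_mem_pointwise_smul m a ⊤ trivial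
  obtain ⟨Q, hQ, hQq⟩ := Ideal.exists_minimalPrimes_le (hann.trans hq)
  have := hQ.isPrime
  have hQ1 : 1 ≤ Q.height :=
    (Ideal.one_le_height_span_singleton_of_mem_nonZeroDivisors ha).trans
      (Ideal.height_mono ((Ideal.span_singleton_le_iff_mem Q).mpr (hQ.1.2 haN)))
  rcases hQq.lt_or_eq with hlt | rfl
  · calc (2 : ℕ∞) = 1 + 1 := by norm_num
      _ ≤ Q.height + 1 := by gcongr
      _ ≤ q.height := Ideal.height_add_one_le_of_lt_of_isPrime hlt
  · have hQ_ne : Q.height ≠ 1 := by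
      intro h1
      have hQmin : Q ∈ minOne R M a := ⟨hQ, by rw [idealHt_eq_height, h1]⟩
      obtain ⟨s, hsQ, hsx⟩ := Set.mem_iInter₂.mp hx Q hQmin
      exact hsQ (hq (Submodule.mem_colon_span_singleton.mpr hsx))
    exact Order.add_one_le_of_lt (lt_of_le_of_ne hQ1 hQ_ne.symm)

lemma mk_mem_smul_tilde_of_mem_Uset {a : R} (ha : a ∈ nonZeroDivisors R) {x : M}
    (hx : x ∈ Uset R M a) : mk x ∈ a • tilde R M := by
  have hbij := LocalizedModule.smul_bijective (M := M) ha
  obtain ⟨f, hf : a • f = mk x⟩ := hbij.2 (mk x)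
  refine ⟨f, ⟨(a • (⊤ : Submodule R M)).colon (Submodule.span R {x}), ?_, fun j hj => ?_⟩, hf⟩
  · rw [idealHt_eq_height, Ideal.height_eq_inf_minimalPrimes]
    refine le_iInf₂ fun q hq => ?_
    have := hq.isPrime
    exact two_le_height_of_mem_Uset_of_colon_le ha hx hq.1.2
  · obtain ⟨m, -, hm : a • m = j • x⟩ := Submodule.mem_colon_span_singleton.mp hj
    refine ⟨m, hbij.1 ?_⟩
    change a • mk m = a • j • f
    rw [← map_smul, hm, map_smul, ← hf, smul_comm]

lemma mem_Uset_of_mk_eq_smul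
    (htf : ∀ r ∈ nonZeroDivisors R, Function.Injective fun x : M => r • x)
    {a : R} {f : LocalizedModule (nonZeroDivisors R) M} (hf : f ∈ tilde R M) {x : M}
    (hx : mk x = a • f) : x ∈ Uset R M a := by
  obtain ⟨I, hI, hIf⟩ := hf
  refine Set.mem_iInter₂.mpr fun p hp => ?_
  have hp1 : p.height = 1 := (idealHt_eq_height p).symm.trans hp.2
  have hIp : ¬I ≤ p := fun hle => absurd
    ((idealHt_eq_height I ▸ hI).trans ((Ideal.height_mono hle).trans_eq hp1)) (by norm_num)
  obtain ⟨s, hsI, hsp⟩ := SetLike.not_le_iff_exists.mp hIp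
  obtain ⟨y, hy⟩ := hIf s hsI
  refine ⟨s, hsp, Submodule.mem_smul_pointwise_iff_exists _ _ _ |>.mpr ⟨y, trivial, ?_⟩⟩
  apply LocalizedModule.mkLinearMap_injective htf
  rw [map_smul, map_smul, hx, hy, smul_comm]

lemma image_Uset_eq_smul_tilde
    (htf : ∀ r ∈ nonZeroDivisors R, Function.Injective fun x : M => r • x)
    {a : R} (ha : a ∈ nonZeroDivisors R) (haT : ∀ f ∈ tilde R M, a • f ∈ Set.range mk) :
    mk '' Uset R M a = a • tilde R M := by
  refine (Set.image_subset_iff.mpr fun x hx => mk_mem_smul_tilde_of_mem_Uset ha hx).antisymm ?_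
  rintro _ ⟨f, hf, rfl⟩
  obtain ⟨x, hx⟩ := haT f hf
  exact ⟨x, mem_Uset_of_mk_eq_smul htf hf hx, hx⟩

lemma exists_image_Uset_eq_smul_tilde_iff
    (htf : ∀ r ∈ nonZeroDivisors R, Function.Injective fun x : M => r • x) :
    (∃ a ∈ nonZeroDivisors R, mk '' Uset R M a = a • tilde R M) ↔
      ∃ a ∈ nonZeroDivisors R, ∀ f ∈ tilde R M, a • f ∈ Set.range mk := by
  refine ⟨fun ⟨a, ha, hU⟩ => ⟨a, ha, fun f hf => ?_⟩,
    fun ⟨a, ha, haT⟩ => ⟨a, ha, image_Uset_eq_smul_tilde htf ha haT⟩⟩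
  obtain ⟨x, -, hx⟩ := hU.symm ▸ Set.smul_mem_smul_set hf
  exact ⟨x, hx⟩

lemma exists_smul_mem_range_of_tilde_eq_span {s : Finset (LocalizedModule (nonZeroDivisors R) M)}
    (hs : tilde R M = ↑(Submodule.span R (s : Set (LocalizedModule (nonZeroDivisors R) M)))) :
    ∃ a ∈ nonZeroDivisors R, ∀ f ∈ tilde R M, a • f ∈ Set.range mk := by
  obtain ⟨a, ha, haN⟩ := LocalizedModule.exists_smul_mem_range_of_fg (M := M) ⟨s, rfl⟩
  exact ⟨a, ha, fun f hf => haN f (by rwa [hs] at hf)⟩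

lemma eq_setOf_smul_mem_image_Uset {a : R} (ha : a ∈ nonZeroDivisors R)
    {T : Set (LocalizedModule (nonZeroDivisors R) M)} (hU : mk '' Uset R M a = a • T) :
    T = {f | a • f ∈ mk '' Uset R M a} := by
  ext f
  rw [Set.mem_ofPred_eq, hU]
  exact (LocalizedModule.smul_bijective ha).1.mem_set_image.symm

lemma exists_finset_eq_span_of_image_Uset_eq_smul [IsNoetherianRing R] [Module.Finite R M]
    {a : R} (ha : a ∈ nonZeroDivisors R) {T : Set (LocalizedModule (nonZeroDivisors R) M)}
    (hU : mk '' Uset R M a = a • T) :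
    ∃ s : Finset (LocalizedModule (nonZeroDivisors R) M),
      T = ↑(Submodule.span R (s : Set (LocalizedModule (nonZeroDivisors R) M))) := by
  obtain ⟨N, hN⟩ := exists_submodule_coe_eq_Uset (M := M) a
  let e := LinearEquiv.ofBijective (LinearMap.lsmul R _ a)
    (LocalizedModule.smul_bijective (M := M) ha)
  have hT : T = (N.map mk).map e.symm.toLinearMap := by
    rw [Submodule.map_coe, Submodule.map_coe, hN, hU, LinearEquiv.coe_coe,
      LinearEquiv.image_symm_eq_preimage]
    exact (Set.preimage_image_eq T (LocalizedModule.smul_bijective ha).1).symm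
  obtain ⟨s, hs⟩ := ((IsNoetherian.noetherian N).map mk).map e.symm.toLinearMap
  exact ⟨s, hs ▸ hT⟩

end

/-- for a finitely generated torsion-free module `M` over a
Noetherian ring `R`, the following are equivalent: (1) `M̃` is a finitely
generated `R`-module; (2) `U(aM) = aM̃` for some non-zerodivisor `a`;
(3) `M :_R M̃` contains a non-zerodivisor. In that case
`M̃ = U(aM)/a` for some non-zerodivisor `a`. -/
theorem stmt15 {R : Type*} [CommRing R] [IsNoetherianRing R]
    {M : Type*} [AddCommGroup M] [Module R M] [Module.Finite R M]
    (htf : ∀ r ∈ nonZeroDivisors R, Function.Injective fun x : M => r • x)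
    (T : Set (LocalizedModule (nonZeroDivisors R) M))
    (hT : T = {f | ∃ I : Ideal R, 2 ≤ idealHt I ∧ ∀ i ∈ I,
      i • f ∈ LinearMap.range (LocalizedModule.mkLinearMap (nonZeroDivisors R) M)}) :
    ((∃ s : Finset (LocalizedModule (nonZeroDivisors R) M),
        T = ↑(Submodule.span R (↑s : Set (LocalizedModule (nonZeroDivisors R) M)))) ↔
      (∃ a ∈ nonZeroDivisors R,
        (LocalizedModule.mkLinearMap (nonZeroDivisors R) M) '' Uset R M a = a • T)) ∧
    ((∃ a ∈ nonZeroDivisors R,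
        (LocalizedModule.mkLinearMap (nonZeroDivisors R) M) '' Uset R M a = a • T) ↔
      (∃ a ∈ nonZeroDivisors R, ∀ f ∈ T,
        a • f ∈ Set.range (LocalizedModule.mkLinearMap (nonZeroDivisors R) M))) ∧
    ((∃ s : Finset (LocalizedModule (nonZeroDivisors R) M),
        T = ↑(Submodule.span R (↑s : Set (LocalizedModule (nonZeroDivisors R) M)))) →
      ∃ a ∈ nonZeroDivisors R,
        T = {f | a • f ∈ (LocalizedModule.mkLinearMap (nonZeroDivisors R) M) '' Uset R M a}) := by
  obtain rfl : T = tilde R M := hT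
  have h23 := exists_image_Uset_eq_smul_tilde_iff htf
  refine ⟨⟨fun ⟨s, hs⟩ => h23.2 (exists_smul_mem_range_of_tilde_eq_span hs),
      fun ⟨a, ha, hU⟩ => exists_finset_eq_span_of_image_Uset_eq_smul ha hU⟩,
    h23, fun ⟨s, hs⟩ => ?_⟩
  obtain ⟨a, ha, hU⟩ := h23.2 (exists_smul_mem_range_of_tilde_eq_span hs)
  exact ⟨a, ha, eq_setOf_smul_mem_image_Uset ha hU⟩
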